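/- arXiv:1302.3783 — 2 statements merged into one kernel-verified Lean document; each statement's English description precedes it below -/
import Mathlib

section
/- Let u_1, …, u_r be factors of the Thue–Morse word T such that the words φ(u_1), …, φ(u_r) are pairwise Abelian equivalent, where φ maps a_1…a_n to b_1…b_{n−1} with b_i = 1 iff a_i = a_{i+1}. Then the u_i lie in at most 4 distinct 2-Abelian equivalence classes. -/
/-- Number of occurrences of `x` as a factor of `u`. -/
def occ {α : Type*} [DecidableEq α] (u x : List α) : ℕ :=
  ((List.range (u.length + 1)).filter (fun i => decide (x <+: u.drop i))).length

/-- `k`-Abelian equivalence: same number of occurrences of every word of length at most `k`. -/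
def KAbEq {α : Type*} [DecidableEq α] (k : ℕ) (u v : List α) : Prop :=
  ∀ x : List α, x.length ≤ k → occ u x = occ v x

/-- The factor of the infinite word `w` of length `n` starting at position `i`. -/
def factorAt {α : Type*} (w : ℕ → α) (i n : ℕ) : List α :=
  (List.range n).map (fun j => w (i + j))

/-- `k`-Abelian complexity: the number of `k`-Abelian classes of length-`n` factors of `w`. -/
noncomputable def rho {α : Type*} [DecidableEq α] (k : ℕ) (w : ℕ → α) (n : ℕ) : ℕ :=
  Set.ncard { C : Set (List α) | ∃ i : ℕ,
    C = { v | (∃ j : ℕ, v = factorAt w j n) ∧ KAbEq k v (factorAt w i n) } }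

/-- The map `φ`: `b_i = 1` iff `a_i = a_{i+1}`. -/
def phiL (u : List Bool) : List Bool :=
  List.zipWith (fun a b => decide (a = b)) u u.tail

/-!
A nonempty binary word is determined up to 2-Abelian equivalence by its length, its first
letter and its numbers of factors `00` and `11`: the last letter is then fixed by the parity of
the number of letter changes, hence so are `#01 - #10`, `#01 + #10` and the letter counts.
Abelian equivalence of the `φ(u_j)` fixes the common length `m + 1` and `#00 + #11`.
In `T` the pair at an even position is `01` or `10`, and the pair at `2k + 1` is `11` or `00`
exactly when `T(k + 1) - T(k)` is `1` or `-1`; telescoping gives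
`#11 - #00 = T((i + m)/2) - T(i/2)` for the factor at position `i`. Since `#11 - #00` has the
parity of `#00 + #11`, it is fixed by the bit `T((i + m)/2)`, so the 2-Abelian class of the
factor only depends on the two bits `T(i)` and `T((i + m)/2)`.
-/

theorem occ_cons {α : Type*} [DecidableEq α] (a : α) (u x : List α) :
    occ (a :: u) x = (if x <+: a :: u then 1 else 0) + occ u x := by
  simp only [occ, List.length_cons, List.range_succ_eq_map, List.filter_cons, List.filter_map,
    List.drop_zero, List.drop_succ_cons, decide_eq_true_eq, Function.comp_def]
  split_ifs <;> simp [Nat.add_comm]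

theorem occ_nil_right {α : Type*} [DecidableEq α] (u : List α) : occ u [] = u.length + 1 := by
  simp [occ]

theorem occ_nil_singleton {α : Type*} [DecidableEq α] (x : α) : occ [] [x] = 0 := by
  simp [occ]

theorem occ_cons_singleton {α : Type*} [DecidableEq α] (a x : α) (u : List α) :
    occ (a :: u) [x] = (if a = x then 1 else 0) + occ u [x] := by
  simp [occ_cons, eq_comm]

theorem occ_singleton_pair {α : Type*} [DecidableEq α] (a x y : α) : occ [a] [x, y] = 0 := by
  rw [occ_cons]
  simp [occ]

theorem occ_cons_cons_pair {α : Type*} [DecidableEq α] (a b x y : α) (u : List α) :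
    occ (a :: b :: u) [x, y] = (if a = x ∧ b = y then 1 else 0) + occ (b :: u) [x, y] := by
  simp [occ_cons, eq_comm]

theorem occ_false_add_occ_true : ∀ w : List Bool, occ w [false] + occ w [true] = w.length
  | [] => by simp [occ_nil_singleton]
  | a :: v => by
    have := occ_false_add_occ_true v
    cases a <;> simp [occ_cons_singleton] <;> omega

theorem occ_pairs_sum : ∀ (a : Bool) (v : List Bool),
    occ (a :: v) [false, false] + occ (a :: v) [false, true] + occ (a :: v) [true, false]
      + occ (a :: v) [true, true] = v.length
  | a, [] => by simp [occ_singleton_pair]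
  | a, b :: v => by
    have := occ_pairs_sum b v
    cases a <;> cases b <;> simp [occ_cons_cons_pair] <;> omega

theorem occ_true_eq_toNat_head_add : ∀ (a : Bool) (v : List Bool),
    occ (a :: v) [true] = a.toNat + occ (a :: v) [false, true] + occ (a :: v) [true, true]
  | a, [] => by cases a <;> simp [occ_cons_singleton, occ_singleton_pair, occ_nil_singleton]
  | a, b :: v => by
    have := occ_true_eq_toNat_head_add b v
    cases a <;> cases b <;> simp_all [occ_cons_cons_pair, occ_cons_singleton] <;> omega

theorem occ_false_true_add_toNat_head : ∀ (a : Bool) (v : List Bool),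
    occ (a :: v) [false, true] + a.toNat
      = occ (a :: v) [true, false] + ((a :: v).getLast (List.cons_ne_nil a v)).toNat
  | a, [] => by simp [occ_singleton_pair]
  | a, b :: v => by
    have := occ_false_true_add_toNat_head b v
    cases a <;> cases b <;> simp_all [occ_cons_cons_pair] <;> omega
theorem phiL_cons_cons (a b : Bool) (v : List Bool) :
    phiL (a :: b :: v) = decide (a = b) :: phiL (b :: v) := rfl

theorem length_phiL (w : List Bool) : (phiL w).length = w.length - 1 := by
  simp [phiL]

theorem occ_phiL_true : ∀ w : List Bool,
    occ (phiL w) [true] = occ w [false, false] + occ w [true, true]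
  | [] => by simp [phiL, occ]
  | [a] => by simp [phiL, occ_nil_singleton, occ_singleton_pair]
  | a :: b :: v => by
    have := occ_phiL_true (b :: v)
    rw [phiL_cons_cons, occ_cons_singleton]
    cases a <;> cases b <;> simp [occ_cons_cons_pair] <;> omega

theorem kAbEq_two_of_occ_eq {u v : List Bool} (hlen : u.length = v.length)
    (hhead : u.head? = v.head?) (h00 : occ u [false, false] = occ v [false, false])
    (h11 : occ u [true, true] = occ v [true, true]) : KAbEq 2 u v := by
  match u, v, hhead with
  | [], [], _ => exact fun _ _ => rfl
  | a :: u, _ :: v, rfl =>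
    have := occ_false_true_add_toNat_head a u
    have := occ_false_true_add_toNat_head a v
    have := occ_pairs_sum a u
    have := occ_pairs_sum a v
    have := occ_true_eq_toNat_head_add a u
    have := occ_true_eq_toNat_head_add a v
    have := occ_false_add_occ_true (a :: u)
    have := occ_false_add_occ_true (a :: v)
    have := Bool.toNat_le ((a :: u).getLast (List.cons_ne_nil a u))
    have := Bool.toNat_le ((a :: v).getLast (List.cons_ne_nil a v))
    simp only [List.length_cons] at *
    intro x hx
    match x, hx with
    | [], _ => simp only [occ_nil_right, List.length_cons, hlen]
    | [false], _ => omega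
    | [true], _ => omega
    | [false, false], _ => exact h00
    | [false, true], _ => omega
    | [true, false], _ => omega
    | [true, true], _ => exact h11

theorem factorAt_succ {α : Type*} (w : ℕ → α) (i n : ℕ) :
    factorAt w i (n + 1) = w i :: factorAt w (i + 1) n := by
  simp only [factorAt, List.range_succ_eq_map, List.map_cons, List.map_map, Function.comp_def]
  simp [Nat.add_assoc, Nat.add_comm 1]

namespace ThueMorse

variable {T : ℕ → Bool} (hTe : ∀ n, T (2 * n) = T n) (hTo : ∀ n, T (2 * n + 1) = !T n)
include hTe hTo

theorem pair_step (i : ℕ) :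
    (if T i = true ∧ T (i + 1) = true then 1 else 0) + (T (i / 2)).toNat
      = (if T i = false ∧ T (i + 1) = false then 1 else 0) + (T ((i + 1) / 2)).toNat := by
  obtain ⟨k, rfl | rfl⟩ := Nat.even_or_odd' i
  · rw [hTe, hTo, show (2 * k + 1) / 2 = k by omega, show 2 * k / 2 = k by omega]
    cases T k <;> simp
  · rw [hTo, show 2 * k + 1 + 1 = 2 * (k + 1) by omega, hTe,
      show (2 * k + 1) / 2 = k by omega, show 2 * (k + 1) / 2 = k + 1 by omega]
    cases T k <;> cases T (k + 1) <;> simp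

theorem occ_factorAt_true_true_add (i m : ℕ) :
    occ (factorAt T i (m + 1)) [true, true] + (T (i / 2)).toNat
      = occ (factorAt T i (m + 1)) [false, false] + (T ((i + m) / 2)).toNat := by
  induction m generalizing i with
  | zero => simp [factorAt, occ_singleton_pair]
  | succ m ih =>
    have := ih (i + 1)
    have := pair_step hTe hTo i
    rw [factorAt_succ, factorAt_succ, occ_cons_cons_pair, occ_cons_cons_pair,
      ← factorAt_succ, show i + (m + 1) = i + 1 + m by omega]
    omega

theorem kAbEq_two_factorAt {i i' m : ℕ} (hhead : T i = T i')
    (hmid : T ((i + m) / 2) = T ((i' + m) / 2))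
    (hφ : occ (phiL (factorAt T i (m + 1))) [true] = occ (phiL (factorAt T i' (m + 1))) [true]) :
    KAbEq 2 (factorAt T i (m + 1)) (factorAt T i' (m + 1)) := by
  have h := occ_factorAt_true_true_add hTe hTo i m
  have h' := occ_factorAt_true_true_add hTe hTo i' m
  have := Bool.toNat_le (T (i / 2))
  have := Bool.toNat_le (T (i' / 2))
  rw [occ_phiL_true, occ_phiL_true] at hφ
  rw [hmid] at h
  exact kAbEq_two_of_occ_eq (by simp [factorAt]) (by simp [factorAt_succ, hhead]) (by omega)
    (by omega)

end ThueMorse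

theorem exists_finset_card_le_of_eq_imp {ι β : Type*} [Fintype ι] [Fintype β] (c : ι → β)
    {R : ι → ι → Prop} (hR : ∀ j j', c j = c j' → R j j') :
    ∃ s : Finset ι, s.card ≤ Fintype.card β ∧ ∀ j, ∃ j' ∈ s, R j j' := by
  classical
  cases isEmpty_or_nonempty ι
  · exact ⟨∅, by simp, isEmptyElim⟩
  refine ⟨(Finset.univ.image c).image (Function.invFun c), ?_, fun j => ?_⟩
  · exact Finset.card_image_le.trans (Finset.card_le_univ _)
  · exact ⟨Function.invFun c (c j), by simp, hR _ _ (Function.invFun_eq ⟨j, rfl⟩).symm⟩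

theorem eq_of_head?_eq {u v : List Bool} (hu : u.length ≤ 1) (hv : v.length ≤ 1)
    (h : u.head? = v.head?) : u = v := by
  match u, v with
  | [], [] => rfl
  | [_], [_] => simpa using h
  | [], [_] | [_], [] => simp at h

theorem stmt12_general (T : ℕ → Bool)
    (hTe : ∀ n, T (2 * n) = T n) (hTo : ∀ n, T (2 * n + 1) = !T n)
    (r : ℕ) (u : Fin r → List Bool)
    (hfac : ∀ j, ∃ i, u j = factorAt T i (u j).length)
    (habel : ∀ j j', KAbEq 1 (phiL (u j)) (phiL (u j'))) :
    ∃ s : Finset (Fin r), s.card ≤ 4 ∧ ∀ j, ∃ j' ∈ s, KAbEq 2 (u j) (u j') := by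
  by_cases hshort : ∀ j, (u j).length ≤ 1
  · obtain ⟨s, hs, hcover⟩ := exists_finset_card_le_of_eq_imp (fun j => (u j).head?)
      (R := fun j j' => KAbEq 2 (u j) (u j'))
      fun j j' h => eq_of_head?_eq (hshort j) (hshort j') h ▸ fun _ _ => rfl
    exact ⟨s, hs.trans (by simp), hcover⟩
  simp only [not_forall, not_le] at hshort
  obtain ⟨j₀, hj₀⟩ := hshort
  have hlen : ∀ j, (u j).length = (u j₀).length - 1 + 1 := fun j => by
    have := habel j j₀ [] (by simp)
    simp only [occ_nil_right, length_phiL] at this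
    omega
  set m := (u j₀).length - 1
  choose i hi using fun j => (hlen j ▸ hfac j : ∃ i, u j = factorAt T i (m + 1))
  obtain ⟨s, hs, hcover⟩ :=
    exists_finset_card_le_of_eq_imp (fun j => (T (i j), T ((i j + m) / 2)))
      (R := fun j j' => KAbEq 2 (u j) (u j')) fun j j' h => by
        simp only [Prod.mk.injEq] at h
        have hφ := habel j j' [true] (by simp)
        rw [hi, hi] at hφ ⊢
        exact ThueMorse.kAbEq_two_factorAt hTe hTo h.1 h.2 hφ
  exact ⟨s, hs.trans (by simp), hcover⟩

theorem stmt12 (T : ℕ → Bool)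
    (hT0 : T 0 = false) (hTe : ∀ n, T (2 * n) = T n) (hTo : ∀ n, T (2 * n + 1) = !T n)
    (r : ℕ) (u : Fin r → List Bool)
    (hfac : ∀ j, ∃ i, u j = factorAt T i (u j).length)
    (habel : ∀ j j', KAbEq 1 (phiL (u j)) (phiL (u j'))) :
    ∃ s : Finset (Fin r), s.card ≤ 4 ∧ ∀ j, ∃ j' ∈ s, KAbEq 2 (u j) (u j') :=
  stmt12_general T hTe hTo r u hfac habel
end

section
/- Let w ∈ {0,1}^ω and k ≥ 1 be such that every factor of w of length k contains at most one occurrence of the letter 1. Then two factors of w of the same length n ≥ k−1 are k-Abelian equivalent if and only if they are Abelian equivalent and have the same prefix of length k−1 and the same suffix of length k−1. Consequently ρ^{(k)}_w(n) ≤ ρ^{(1)}_w(n) · 4^{k−1} for all n, i.e., ρ^{(k)}_w(n) = Θ(ρ^{(1)}_w(n)). -/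
/-!
If any two ones of `w` are at distance at least `k`, every window of `w` of length `m ≤ k` is a
word `oneHot m c` with at most one `1`. In a factor `u` of length `n`, the word with its `1` at
position `c` occurs once for each `1` of `u` outside the first `c` and the last `m - c - 1`
letters, the all-false word fills up the remaining `n + 1 - m` windows, and any other word does
not occur at all. So the `k`-Abelian class of `u` is determined by its number of ones and its
prefix and suffix of length `k - 1`. Conversely these are `k`-Abelian invariants, because
`occ u x = [x is a prefix of u] + ∑ₐ occ u (a :: x)`, and symmetrically for suffixes. Mapping
a `k`-class to its Abelian class, prefix and suffix is therefore injective, which bounds `ρ⁽ᵏ⁾`.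
-/

open Finset

section Occurrences

variable {α : Type*} [DecidableEq α]

theorem occ_eq_card_filter (u x : List α) :
    occ u x = #{i ∈ range (u.length + 1) | x <+: u.drop i} := rfl

theorem occ_eq_sum (u x : List α) :
    occ u x = ∑ i ∈ range (u.length + 1), if x <+: u.drop i then 1 else 0 := by
  rw [occ_eq_card_filter, card_filter]

theorem occ_nil (u : List α) : occ u [] = u.length + 1 := by
  simp [occ_eq_sum]

theorem sum_ite_cons_prefix [Fintype α] (x z : List α) :
    (∑ a, if a :: x <+: z then 1 else 0) = if z ≠ [] ∧ x <+: z.tail then 1 else 0 := by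
  cases z with
  | nil => simp
  | cons b t =>
    simp only [List.cons_prefix_cons, ite_and, sum_ite_eq', mem_univ, if_true, ne_eq,
      reduceCtorEq, not_false_eq_true, List.tail_cons]

theorem ite_prefix_eq_add_sum_append_prefix [Fintype α] (x z : List α) :
    (if x <+: z then 1 else 0) =
      (if z = x then 1 else 0) + ∑ a, if x ++ [a] <+: z then 1 else 0 := by
  by_cases hxz : x <+: z
  · obtain ⟨t, rfl⟩ := hxz
    rcases t with _ | ⟨b, t⟩
    · have : ∀ a, ¬ x ++ [a] <+: x := fun a h => by simpa using h.length_le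
      simp [this]
    · simp only [List.prefix_append_right_inj, List.cons_prefix_cons, ite_and, sum_ite_eq',
        mem_univ]
      simp
  · have hne : z ≠ x := by rintro rfl; exact hxz List.prefix_rfl
    have hnot : ∀ a, ¬ x ++ [a] <+: z := fun a h => hxz ((List.prefix_append x [a]).trans h)
    simp [hxz, hne, hnot]

theorem occ_eq_ite_prefix_add_sum_occ_cons [Fintype α] (u x : List α) :
    occ u x = (if x <+: u then 1 else 0) + ∑ a, occ u (a :: x) := by
  simp only [occ_eq_sum]
  rw [sum_comm, sum_range_succ', sum_range_succ]
  simp only [sum_ite_cons_prefix, List.tail_drop, List.drop_zero, List.drop_length]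
  have hne : ∀ i ∈ range u.length, u.drop i ≠ [] := fun i hi => by
    simpa [List.drop_eq_nil_iff] using hi
  simp only [ne_eq, not_true_eq_false, false_and, if_false, add_zero]
  rw [add_comm]
  congr 1
  exact sum_congr rfl fun i hi => if_congr (and_iff_right (hne i hi)).symm rfl rfl

theorem sum_ite_drop_eq (u x : List α) :
    (∑ i ∈ range (u.length + 1), if u.drop i = x then 1 else 0) = if x <:+ u then 1 else 0 := by
  have key : ∀ i ∈ range (u.length + 1),
      (u.drop i = x ↔ x <:+ u ∧ u.length - x.length = i) := by
    intro i hi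
    rw [List.suffix_iff_eq_drop]
    constructor
    · rintro rfl
      rw [mem_range] at hi
      refine ⟨?_, ?_⟩ <;> simp [Nat.sub_sub_self (Nat.le_of_lt_succ hi)]
    · rintro ⟨h, rfl⟩
      exact h.symm
  rw [sum_congr rfl fun i hi => if_congr (key i hi) rfl rfl]
  by_cases hx : x <:+ u
  · simp only [hx, true_and, sum_ite_eq, mem_range, if_true]
    exact if_pos (by omega)
  · simp [hx]

theorem occ_eq_ite_suffix_add_sum_occ_append [Fintype α] (u x : List α) :
    occ u x = (if x <:+ u then 1 else 0) + ∑ a, occ u (x ++ [a]) := by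
  simp only [occ_eq_sum]
  rw [sum_comm, ← sum_ite_drop_eq, ← sum_add_distrib]
  exact sum_congr rfl fun i _ => ite_prefix_eq_add_sum_append_prefix x _

namespace KAbEq

variable {k : ℕ} {u v z : List α}

@[refl] theorem refl (k : ℕ) (u : List α) : KAbEq k u u := fun _ _ => rfl

theorem symm (h : KAbEq k u v) : KAbEq k v u := fun x hx => (h x hx).symm

theorem trans (h : KAbEq k u v) (h' : KAbEq k v z) : KAbEq k u z :=
  fun x hx => (h x hx).trans (h' x hx)

theorem mono {j : ℕ} (hjk : j ≤ k) (h : KAbEq k u v) : KAbEq j u v :=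
  fun x hx => h x (hx.trans hjk)

theorem length_eq (h : KAbEq k u v) : u.length = v.length := by
  simpa [occ_nil] using h [] (Nat.zero_le k)

variable [Fintype α] {x : List α}

theorem prefix_iff (h : KAbEq k u v) (hx : x.length < k) : x <+: u ↔ x <+: v := by
  have hsum : ∑ a, occ u (a :: x) = ∑ a, occ v (a :: x) :=
    sum_congr rfl fun a _ => h _ (by simpa using hx)
  have hx := h x hx.le
  rw [occ_eq_ite_prefix_add_sum_occ_cons u, occ_eq_ite_prefix_add_sum_occ_cons v, hsum] at hx
  split_ifs at hx <;> grind

theorem suffix_iff (h : KAbEq k u v) (hx : x.length < k) : x <:+ u ↔ x <:+ v := by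
  have hsum : ∑ a, occ u (x ++ [a]) = ∑ a, occ v (x ++ [a]) :=
    sum_congr rfl fun a _ => h _ (by simpa using hx)
  have hx := h x hx.le
  rw [occ_eq_ite_suffix_add_sum_occ_append u, occ_eq_ite_suffix_add_sum_occ_append v, hsum] at hx
  split_ifs at hx <;> grind

theorem take_eq (h : KAbEq k u v) : u.take (k - 1) = v.take (k - 1) := by
  rcases Nat.eq_zero_or_pos k with rfl | hk
  · simp
  have hp := (h.prefix_iff (x := u.take (k - 1)) (by simp; omega)).1 (List.take_prefix _ _)
  rw [List.prefix_iff_eq_take, List.length_take, h.length_eq] at hp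
  rw [hp, ← List.take_eq_take_min]

theorem drop_eq (h : KAbEq k u v) :
    u.drop (u.length - (k - 1)) = v.drop (v.length - (k - 1)) := by
  rcases Nat.eq_zero_or_pos k with rfl | hk
  · simp
  have hs := (h.suffix_iff (x := u.drop (u.length - (k - 1))) (by simp; omega)).1
    (List.drop_suffix _ _)
  rw [List.suffix_iff_eq_drop, List.length_drop, h.length_eq] at hs
  rw [h.length_eq, hs]
  congr 1
  omega

end KAbEq

end Occurrences

section FactorAt

variable {α : Type*} (w : ℕ → α)

@[simp] theorem length_factorAt (i n : ℕ) : (factorAt w i n).length = n := by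
  simp [factorAt]

theorem take_factorAt (i n m : ℕ) : (factorAt w i n).take m = factorAt w i (min m n) := by
  simp [factorAt, ← List.map_take, List.take_range]

theorem drop_factorAt (i n m : ℕ) : (factorAt w i n).drop m = factorAt w (i + m) (n - m) := by
  apply List.ext_getElem <;> simp [factorAt, Nat.add_assoc]

variable {w}

theorem factorAt_eq_factorAt_iff {i j m : ℕ} :
    factorAt w i m = factorAt w j m ↔ ∀ p < m, w (i + p) = w (j + p) := by
  simp [factorAt, List.map_inj_left]

theorem prefix_factorAt_iff {x : List α} {i n : ℕ} :
    x <+: factorAt w i n ↔ x.length ≤ n ∧ factorAt w i x.length = x := by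
  rw [List.prefix_iff_eq_take, take_factorAt]
  constructor
  · intro h
    have hlen : x.length ≤ n := by simpa using congrArg List.length h
    rw [min_eq_left hlen] at h
    exact ⟨hlen, h.symm⟩
  · rintro ⟨hlen, h⟩
    rw [min_eq_left hlen, h]

theorem occ_factorAt [DecidableEq α] (i n : ℕ) (x : List α) :
    occ (factorAt w i n) x =
      #{q ∈ range (n + 1 - x.length) | factorAt w (i + q) x.length = x} := by
  rw [occ_eq_card_filter]
  congr 1
  ext q
  simp only [mem_filter, mem_range, length_factorAt, drop_factorAt, prefix_factorAt_iff,
    ← and_assoc]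
  exact and_congr_left fun _ => by omega

end FactorAt

theorem card_filter_Ico_eq_of_card_filter_range_eq {P Q : ℕ → Prop} [DecidablePred P]
    [DecidablePred Q] {a b n : ℕ} (hbn : b ≤ n)
    (hrange : #{p ∈ range n | P p} = #{p ∈ range n | Q p})
    (hout : ∀ p < n, p < a ∨ b ≤ p → (P p ↔ Q p)) :
    #{p ∈ Ico a b | P p} = #{p ∈ Ico a b | Q p} := by
  rcases lt_or_ge b a with hba | hab
  · simp [Ico_eq_empty_of_le hba.le]
  have split : ∀ f : ℕ → ℕ, ∑ p ∈ range n, f p =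
      ∑ p ∈ Ico 0 a, f p + ∑ p ∈ Ico a b, f p + ∑ p ∈ Ico b n, f p := fun f => by
    rw [range_eq_Ico, sum_Ico_consecutive _ (Nat.zero_le a) hab,
      sum_Ico_consecutive _ (Nat.zero_le b) hbn]
  have hlow : ∑ p ∈ Ico 0 a, (if P p then 1 else 0) =
      ∑ p ∈ Ico 0 a, (if Q p then 1 else 0) :=
    sum_congr rfl fun p hp => by
      rw [mem_Ico] at hp
      exact if_congr (hout p (by omega) (.inl hp.2)) rfl rfl
  have hhigh : ∑ p ∈ Ico b n, (if P p then 1 else 0) =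
      ∑ p ∈ Ico b n, (if Q p then 1 else 0) :=
    sum_congr rfl fun p hp => by
      rw [mem_Ico] at hp
      exact if_congr (hout p hp.2 (.inr hp.1)) rfl rfl
  simp only [card_filter] at hrange ⊢
  rw [split, split, hlow, hhigh] at hrange
  omega

section Separated

variable {k : ℕ} {w : ℕ → Bool}

def OnesSeparated (k : ℕ) (w : ℕ → Bool) : Prop :=
  ∀ ⦃p q : ℕ⦄, p < q → w p = true → w q = true → p + k ≤ q

-- For `c ≥ m` this is the all-false word.
def oneHot (m c : ℕ) : List Bool :=
  (List.range m).map fun t => decide (t = c)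

@[simp] theorem length_oneHot (m c : ℕ) : (oneHot m c).length = m := by
  simp [oneHot]

theorem oneHot_inj_of_le {m c c' : ℕ} (hc : c ≤ m) (hc' : c' ≤ m)
    (h : oneHot m c = oneHot m c') : c = c' := by
  simp only [oneHot, List.map_inj_left, List.mem_range] at h
  by_contra hne
  rcases lt_or_gt_of_ne hne with hlt | hlt
  · simpa [hne] using h c (by omega)
  · simpa [Ne.symm hne] using h c' (by omega)

theorem factorAt_eq_oneHot_iff_forall {j m c : ℕ} :
    factorAt w j m = oneHot m c ↔ ∀ t < m, w (j + t) = decide (t = c) := by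
  simp [factorAt, oneHot, List.map_inj_left]

theorem occ_factorAt_true (i n : ℕ) :
    occ (factorAt w i n) [true] = #{p ∈ range n | w (i + p) = true} := by
  rw [occ_factorAt]
  simp [factorAt]

theorem onesSeparated_of_occ_le_one (h : ∀ i, occ (factorAt w i k) [true] ≤ 1) :
    OnesSeparated k w := by
  intro p q hpq hp hq
  by_contra hlt
  have hsub : ({0, q - p} : Finset ℕ) ⊆ {t ∈ range k | w (p + t) = true} := by
    intro t ht
    simp only [mem_insert, mem_singleton] at ht
    rcases ht with rfl | rfl
    · simp [hp]; omega
    · simp [show p + (q - p) = q by omega, hq]; omega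
  have := card_le_card hsub
  rw [← occ_factorAt_true, card_pair (by omega)] at this
  exact absurd (h p) (by omega)

namespace OnesSeparated

variable {m c : ℕ}

theorem factorAt_eq_oneHot_iff (hw : OnesSeparated k w) (hm : m ≤ k) (hc : c < m) {j : ℕ} :
    factorAt w j m = oneHot m c ↔ w (j + c) = true := by
  rw [factorAt_eq_oneHot_iff_forall]
  refine ⟨fun h => by simpa using h c hc, fun hjc t ht => ?_⟩
  rcases lt_trichotomy t c with htc | rfl | htc
  · have := @hw (j + t) (j + c) (by omega)
    simp only [htc.ne, decide_false]
    by_contra hwt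
    have := this (by simpa using hwt) hjc
    omega
  · simpa
  · have := @hw (j + c) (j + t) (by omega) hjc
    simp only [htc.ne', decide_false]
    by_contra hwt
    have := this (by simpa using hwt)
    omega

theorem exists_factorAt_eq_oneHot (hw : OnesSeparated k w) (hm : m ≤ k) (j : ℕ) :
    ∃ c ≤ m, factorAt w j m = oneHot m c := by
  by_cases h : ∃ c < m, w (j + c) = true
  · obtain ⟨c, hc, hjc⟩ := h
    exact ⟨c, hc.le, (hw.factorAt_eq_oneHot_iff hm hc).2 hjc⟩
  · push Not at h
    refine ⟨m, le_rfl, factorAt_eq_oneHot_iff_forall.2 fun t ht => ?_⟩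
    simpa [ht.ne] using h t ht

theorem sum_occ_oneHot (hw : OnesSeparated k w) (hm : m ≤ k) (i n : ℕ) :
    ∑ c ∈ range (m + 1), occ (factorAt w i n) (oneHot m c) = n + 1 - m := by
  simp only [occ_factorAt, length_oneHot]
  rw [← sum_image (g := oneHot m)
      (f := fun x => #{q ∈ range (n + 1 - m) | factorAt w (i + q) m = x})
    fun c hc c' hc' h => oneHot_inj_of_le (by simpa [Nat.lt_succ_iff] using hc)
      (by simpa [Nat.lt_succ_iff] using hc') h,
    ← card_eq_sum_card_fiberwise, card_range]
  intro q _
  obtain ⟨c, hc, h⟩ := hw.exists_factorAt_eq_oneHot hm (i + q)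
  exact mem_image.2 ⟨c, by simpa [Nat.lt_succ_iff] using hc, h.symm⟩

theorem occ_oneHot (hw : OnesSeparated k w) (hm : m ≤ k) (hc : c < m) (i n : ℕ) :
    occ (factorAt w i n) (oneHot m c) = #{p ∈ Ico c (c + (n + 1 - m)) | w (i + p) = true} := by
  rw [occ_factorAt, card_filter, card_filter, sum_Ico_eq_sum_range]
  simp [hw.factorAt_eq_oneHot_iff hm hc, Nat.add_assoc, Nat.add_comm c]

end OnesSeparated

end Separated

section Characterization

variable {k : ℕ} {w : ℕ → Bool}

theorem take_factorAt_eq_take_factorAt_iff {i j n m : ℕ} :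
    (factorAt w i n).take m = (factorAt w j n).take m ↔
      ∀ p < min m n, w (i + p) = w (j + p) := by
  rw [take_factorAt, take_factorAt, factorAt_eq_factorAt_iff]

theorem drop_factorAt_eq_drop_factorAt_iff {i j n m : ℕ} :
    (factorAt w i n).drop m = (factorAt w j n).drop m ↔
      ∀ p, m ≤ p → p < n → w (i + p) = w (j + p) := by
  rw [drop_factorAt, drop_factorAt, factorAt_eq_factorAt_iff]
  refine ⟨fun h p hmp hpn => ?_, fun h p hp => ?_⟩
  · simpa [Nat.add_assoc, Nat.add_sub_cancel' hmp] using h (p - m) (by omega)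
  · simpa [Nat.add_assoc] using h (m + p) (by omega) (by omega)

namespace OnesSeparated

theorem occ_oneHot_eq (hw : OnesSeparated k w) {m c n i j : ℕ} (hn : k ≤ n) (hm : m ≤ k)
    (hc : c ≤ m)
    (hcount : #{p ∈ range n | w (i + p) = true} = #{p ∈ range n | w (j + p) = true})
    (hlow : ∀ p < k - 1, w (i + p) = w (j + p))
    (hhigh : ∀ p, n - (k - 1) ≤ p → p < n → w (i + p) = w (j + p)) :
    occ (factorAt w i n) (oneHot m c) = occ (factorAt w j n) (oneHot m c) := by
  have hlt : ∀ c < m, occ (factorAt w i n) (oneHot m c) = occ (factorAt w j n) (oneHot m c) := by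
    intro c hc
    rw [hw.occ_oneHot hm hc, hw.occ_oneHot hm hc]
    refine card_filter_Ico_eq_of_card_filter_range_eq (by omega) hcount fun p hp hout => ?_
    rw [hout.elim (fun _ => hlow p (by omega)) (fun _ => hhigh p (by omega) hp)]
  rcases hc.lt_or_eq with hc | rfl
  · exact hlt c hc
  -- every window is exactly one `oneHot m c`, so the all-false word takes up the remainder
  · have hi := hw.sum_occ_oneHot hm i n
    have hj := hw.sum_occ_oneHot hm j n
    rw [sum_range_succ] at hi hj
    rw [sum_congr rfl fun c hc => hlt c (mem_range.1 hc)] at hi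
    omega

theorem occ_eq_zero (hw : OnesSeparated k w) {x : List Bool} (hx : x.length ≤ k)
    (hne : ∀ c ≤ x.length, x ≠ oneHot x.length c) (i n : ℕ) :
    occ (factorAt w i n) x = 0 := by
  rw [occ_factorAt, card_eq_zero, filter_eq_empty_iff]
  intro q _ hq
  obtain ⟨c, hc, h⟩ := hw.exists_factorAt_eq_oneHot hx (i + q)
  exact hne c hc (hq.symm.trans h)

theorem kAbEq_factorAt_of_kAbEq_one (hw : OnesSeparated k w) {i j n : ℕ}
    (h₁ : KAbEq 1 (factorAt w i n) (factorAt w j n))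
    (htake : (factorAt w i n).take (k - 1) = (factorAt w j n).take (k - 1))
    (hdrop : (factorAt w i n).drop (n - (k - 1)) = (factorAt w j n).drop (n - (k - 1))) :
    KAbEq k (factorAt w i n) (factorAt w j n) := by
  rcases lt_or_ge n k with hnk | hkn
  -- for `n < k` the prefix of length `k - 1` is the whole factor
  · rw [List.take_of_length_le (by simp; omega), List.take_of_length_le (by simp; omega)] at htake
    rw [htake]
  have hlow : ∀ p < k - 1, w (i + p) = w (j + p) := by
    rwa [take_factorAt_eq_take_factorAt_iff, min_eq_left (by omega)] at htake
  have hcount : #{p ∈ range n | w (i + p) = true} = #{p ∈ range n | w (j + p) = true} := by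
    rw [← occ_factorAt_true, ← occ_factorAt_true]
    exact h₁ [true] le_rfl
  intro x hx
  by_cases hoh : ∃ c ≤ x.length, x = oneHot x.length c
  · obtain ⟨c, hc, hxc⟩ := hoh
    rw [hxc]
    exact hw.occ_oneHot_eq hkn hx hc hcount hlow (drop_factorAt_eq_drop_factorAt_iff.1 hdrop)
  · push Not at hoh
    rw [hw.occ_eq_zero hx hoh, hw.occ_eq_zero hx hoh]

theorem kAbEq_factorAt_iff (hw : OnesSeparated k w) (hk : 1 ≤ k) (i j n : ℕ) :
    KAbEq k (factorAt w i n) (factorAt w j n) ↔ KAbEq 1 (factorAt w i n) (factorAt w j n) ∧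
      (factorAt w i n).take (k - 1) = (factorAt w j n).take (k - 1) ∧
      (factorAt w i n).drop ((factorAt w i n).length - (k - 1)) =
        (factorAt w j n).drop ((factorAt w j n).length - (k - 1)) := by
  refine ⟨fun h => ⟨h.mono hk, h.take_eq, h.drop_eq⟩, fun ⟨h₁, htake, hdrop⟩ => ?_⟩
  rw [length_factorAt, length_factorAt] at hdrop
  exact hw.kAbEq_factorAt_of_kAbEq_one h₁ htake hdrop

end OnesSeparated

end Characterization

theorem Function.FactorsThrough.ncard_range_le {ι β γ : Type*} {g : ι → γ} {f : ι → β}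
    (hg : g.FactorsThrough f) (hf : (Set.range f).Finite) :
    (Set.range g).ncard ≤ (Set.range f).ncard := by
  rcases isEmpty_or_nonempty ι with hι | ⟨⟨i₀⟩⟩
  · simp [Set.range_eq_empty]
  · rw [← hg.extend_comp fun _ => g i₀, Set.range_comp]
    exact Set.ncard_image_le hf

theorem Function.FactorsThrough.ncard_range_le_mul {ι α β γ : Type*} [Finite γ] {f : ι → α}
    {g : ι → β} {e : ι → γ} (hf : f.FactorsThrough fun i => (g i, e i))
    (hg : (Set.range g).Finite) :
    (Set.range f).ncard ≤ (Set.range g).ncard * Nat.card γ := by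
  have hsub : Set.range (fun i => (g i, e i)) ⊆ Set.range g ×ˢ Set.univ :=
    Set.range_subset_iff.2 fun i => ⟨⟨i, rfl⟩, trivial⟩
  have hfin : (Set.range g ×ˢ (Set.univ : Set γ)).Finite := hg.prod Set.finite_univ
  calc (Set.range f).ncard ≤ (Set.range fun i => (g i, e i)).ncard :=
        hf.ncard_range_le (hfin.subset hsub)
    _ ≤ (Set.range g ×ˢ (Set.univ : Set γ)).ncard := Set.ncard_le_ncard hsub hfin
    _ = (Set.range g).ncard * Nat.card γ := by rw [Set.ncard_prod, Set.ncard_univ]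

section Counting

variable {α : Type*} [DecidableEq α]

def factorClass (k : ℕ) (w : ℕ → α) (n : ℕ) (u : List α) : Set (List α) :=
  {v | (∃ j, v = factorAt w j n) ∧ KAbEq k v u}

theorem rho_eq_ncard_range (k : ℕ) (w : ℕ → α) (n : ℕ) :
    rho k w n = (Set.range fun i => factorClass k w n (factorAt w i n)).ncard := by
  simp only [rho, factorClass, Set.range, eq_comm]

theorem factorClass_eq_factorClass_iff {k : ℕ} {w : ℕ → α} {n i j : ℕ} :
    factorClass k w n (factorAt w i n) = factorClass k w n (factorAt w j n) ↔
      KAbEq k (factorAt w i n) (factorAt w j n) := by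
  refine ⟨fun h => ?_, fun h => Set.ext fun v => and_congr_right fun _ =>
    ⟨fun hv => hv.trans h, fun hv => hv.trans h.symm⟩⟩
  have hi : factorAt w i n ∈ factorClass k w n (factorAt w j n) :=
    h ▸ ⟨⟨i, rfl⟩, .refl _ _⟩
  exact hi.2

theorem finite_range_factorClass [Finite α] (k : ℕ) (w : ℕ → α) (n : ℕ) :
    (Set.range fun i => factorClass k w n (factorAt w i n)).Finite := by
  rw [Set.range_comp' (factorClass k w n)]
  exact ((List.finite_length_eq α n).subset (by rintro _ ⟨i, rfl⟩; simp)).image _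

theorem rho_mono [Finite α] {j k : ℕ} (hjk : j ≤ k) (w : ℕ → α) (n : ℕ) :
    rho j w n ≤ rho k w n := by
  rw [rho_eq_ncard_range, rho_eq_ncard_range]
  refine Function.FactorsThrough.ncard_range_le (fun i i' h => ?_) (finite_range_factorClass k w n)
  rw [factorClass_eq_factorClass_iff] at h ⊢
  exact h.mono hjk

end Counting

theorem OnesSeparated.rho_le {k : ℕ} {w : ℕ → Bool} (hw : OnesSeparated k w) (n : ℕ) :
    rho k w n ≤ rho 1 w n * 4 ^ (k - 1) := by
  have hcard : Nat.card (Fin (k - 1) → Bool × Bool) = 4 ^ (k - 1) := by simp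
  rw [rho_eq_ncard_range, rho_eq_ncard_range, ← hcard]
  -- `e i` records the prefix and the suffix of length `k - 1` of the factor at `i`
  refine Function.FactorsThrough.ncard_range_le_mul
    (e := fun i (t : Fin (k - 1)) => (w (i + t), w (i + (n - (k - 1)) + t)))
    (fun i j h => ?_) (finite_range_factorClass 1 w n)
  simp only [Prod.mk.injEq, factorClass_eq_factorClass_iff, funext_iff] at h ⊢
  obtain ⟨h₁, he⟩ := h
  refine hw.kAbEq_factorAt_of_kAbEq_one h₁
    (take_factorAt_eq_take_factorAt_iff.2 fun p hp => (he ⟨p, by omega⟩).1)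
    (drop_factorAt_eq_drop_factorAt_iff.2 fun p hp hpn => ?_)
  simpa [Nat.add_assoc, Nat.add_sub_cancel' hp] using (he ⟨p - (n - (k - 1)), by omega⟩).2

theorem stmt14 (w : ℕ → Bool) (k : ℕ) (hk : 1 ≤ k)
    (h : ∀ i, occ (factorAt w i k) [true] ≤ 1) :
    (∀ n : ℕ, k - 1 ≤ n → ∀ u v : List Bool,
      (∃ i, u = factorAt w i n) → (∃ i, v = factorAt w i n) →
      (KAbEq k u v ↔ KAbEq 1 u v ∧ u.take (k - 1) = v.take (k - 1) ∧
        u.drop (u.length - (k - 1)) = v.drop (v.length - (k - 1)))) ∧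
    (∀ n : ℕ, rho 1 w n ≤ rho k w n ∧ rho k w n ≤ rho 1 w n * 4 ^ (k - 1)) := by
  have hw : OnesSeparated k w := onesSeparated_of_occ_le_one h
  refine ⟨fun n _ u v ⟨i, hu⟩ ⟨j, hv⟩ => hu ▸ hv ▸ hw.kAbEq_factorAt_iff hk i j n,
    fun n => ⟨rho_mono hk w n, hw.rho_le n⟩⟩
end
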